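/- The equilibrium (r₀, r₀, π) with r₀ = √(Φ/(4Ω₀+Φ)) of the reduced vortex dipole system (in variables r₁, r₂, θ) is Lyapunov stable: the conserved function H attains a strict local minimum there. -/

import Mathlib

open Topology

/-- The reduced Hamiltonian as a function on `ℝ × ℝ × ℝ`. -/
noncomputable def HredP (Ω₀ Φ : ℝ) (p : ℝ × ℝ × ℝ) : ℝ :=
  -(1 / 2) * (Ω₀ * Real.log (1 - p.1 ^ 2) + Ω₀ * Real.log (1 - p.2.1 ^ 2)
    + (Φ / 2) * Real.log (p.1 ^ 2 + p.2.1 ^ 2 - 2 * p.1 * p.2.1 * Real.cos p.2.2))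

/-!
Along the ray `θ = π` the Hamiltonian is a sum of convex functions of `(r₁, r₂)` whose gradient
vanishes at `(r₀, r₀)` exactly because `Φ (1 - r₀²) = 4 Ω₀ r₀²`; the tangent-line bound
`1 - b / a ≤ log a - log b` for the logarithm turns this into the quadratic lower bound
`H(r₁, r₂, π) ≥ H(r₀, r₀, π) + Ω₀ / (2 (1 - r₀²)) · ((r₁ - r₀)² + (r₂ - r₀)²)`.
Moving `θ` away from `π` shrinks `r₁₂²` and hence strictly increases `H`.
-/

open Real

/-- The paper's `r₁₂²`. -/
noncomputable def sepSq (r₁ r₂ θ : ℝ) : ℝ := r₁ ^ 2 + r₂ ^ 2 - 2 * r₁ * r₂ * cos θ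

lemma HredP_eq (Ω₀ Φ r₁ r₂ θ : ℝ) :
    HredP Ω₀ Φ (r₁, r₂, θ) =
      -(1 / 2) * (Ω₀ * log (1 - r₁ ^ 2) + Ω₀ * log (1 - r₂ ^ 2) + (Φ / 2) * log (sepSq r₁ r₂ θ)) :=
  rfl

lemma sepSq_pi (r₁ r₂ : ℝ) : sepSq r₁ r₂ π = (r₁ + r₂) ^ 2 := by
  rw [sepSq, cos_pi]; ring

lemma sepSq_pos {r₁ r₂ θ : ℝ} (h₁ : 0 < r₁) (h₂ : 0 < r₂) (hθ : cos θ < 1) :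
    0 < sepSq r₁ r₂ θ := by
  have := mul_pos (mul_pos h₁ h₂) (sub_pos.mpr hθ)
  rw [sepSq]; nlinarith [sq_nonneg (r₁ - r₂)]

lemma sepSq_lt_sepSq_pi {r₁ r₂ θ : ℝ} (h : 0 < r₁ * r₂) (hθ : -1 < cos θ) :
    sepSq r₁ r₂ θ < sepSq r₁ r₂ π := by
  rw [sepSq_pi, sepSq]; nlinarith

lemma sub_div_le_log_sub_log {a b : ℝ} (ha : 0 < a) (hb : 0 < b) :
    (a - b) / a ≤ log a - log b := by
  have := one_sub_inv_le_log_of_pos (div_pos ha hb)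
  rw [sub_div, div_self ha.ne']
  rwa [inv_div, log_div ha.ne' hb.ne'] at this

lemma HredP_pi_lt {Ω₀ Φ r₁ r₂ θ : ℝ} (hΦ : 0 < Φ) (h₁ : 0 < r₁) (h₂ : 0 < r₂)
    (hθ : -1 < cos θ) (hθ' : cos θ < 1) :
    HredP Ω₀ Φ (r₁, r₂, π) < HredP Ω₀ Φ (r₁, r₂, θ) := by
  have := log_lt_log (sepSq_pos h₁ h₂ hθ') (sepSq_lt_sepSq_pi (mul_pos h₁ h₂) hθ)
  rw [HredP_eq, HredP_eq]
  linarith [mul_lt_mul_of_pos_left this hΦ]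

lemma HredP_pi_add_sq_le {Ω₀ Φ r₀ r₁ r₂ : ℝ} (hΩ₀ : 0 ≤ Ω₀) (hr₀ : 0 < r₀) (hr₀' : r₀ ^ 2 < 1)
    (hequil : Φ * (1 - r₀ ^ 2) = 4 * Ω₀ * r₀ ^ 2)
    (h₁ : r₁ ^ 2 < 1) (h₂ : r₂ ^ 2 < 1) (h₁₂ : 0 < r₁ + r₂) :
    HredP Ω₀ Φ (r₀, r₀, π) + Ω₀ / (2 * (1 - r₀ ^ 2)) * ((r₁ - r₀) ^ 2 + (r₂ - r₀) ^ 2) ≤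
      HredP Ω₀ Φ (r₁, r₂, π) := by
  have hd₀ : 0 < 1 - r₀ ^ 2 := by linarith
  have hΦ : Φ = 4 * Ω₀ * r₀ ^ 2 / (1 - r₀ ^ 2) := by field_simp; linarith
  have tangent₁ := sub_div_le_log_sub_log hd₀ (by linarith : 0 < 1 - r₁ ^ 2)
  have tangent₂ := sub_div_le_log_sub_log hd₀ (by linarith : 0 < 1 - r₂ ^ 2)
  have tangent₁₂ := sub_div_le_log_sub_log (by linarith : 0 < r₀ + r₀) h₁₂
  have key : Ω₀ / (2 * (1 - r₀ ^ 2)) * ((r₁ - r₀) ^ 2 + (r₂ - r₀) ^ 2) =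
      Ω₀ / 2 * ((1 - r₀ ^ 2 - (1 - r₁ ^ 2)) / (1 - r₀ ^ 2))
        + Ω₀ / 2 * ((1 - r₀ ^ 2 - (1 - r₂ ^ 2)) / (1 - r₀ ^ 2))
        + Φ / 2 * ((r₀ + r₀ - (r₁ + r₂)) / (r₀ + r₀)) := by
    rw [hΦ]; field_simp; ring
  have hΦ₀ : 0 ≤ Φ := by rw [hΦ]; positivity
  rw [key, HredP_eq, HredP_eq, sepSq_pi, sepSq_pi, log_pow, log_pow]
  push_cast
  linarith [mul_le_mul_of_nonneg_left tangent₁ hΩ₀, mul_le_mul_of_nonneg_left tangent₂ hΩ₀,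
    mul_le_mul_of_nonneg_left tangent₁₂ hΦ₀]

lemma cos_lt_one_of_mem_Ioo {θ : ℝ} (hθ : θ ∈ Set.Ioo 0 (2 * π)) : cos θ < 1 :=
  (cos_le_one θ).lt_of_ne fun h ↦
    hθ.1.ne' ((cos_eq_one_iff_of_lt_of_lt (by linarith [pi_pos, hθ.1]) hθ.2).mp h)

lemma neg_one_lt_cos_of_mem_Ioo {θ : ℝ} (hθ : θ ∈ Set.Ioo 0 (2 * π)) (hπ : θ ≠ π) :
    -1 < cos θ := by
  refine (neg_one_le_cos θ).lt_of_ne fun h ↦ hπ ?_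
  have : cos (θ - π) = 1 := by rw [cos_sub_pi, ← h, neg_neg]
  have := (cos_eq_one_iff_of_lt_of_lt (by linarith [pi_pos, hθ.1])
    (by linarith [pi_pos, hθ.2])).mp this
  linarith

lemma equilibrium_radius_spec {Ω₀ Φ r₀ : ℝ} (hΩ₀ : 0 < Ω₀) (hΦ : 0 < Φ)
    (hr₀ : r₀ = √(Φ / (4 * Ω₀ + Φ))) :
    0 < r₀ ∧ r₀ ^ 2 < 1 ∧ Φ * (1 - r₀ ^ 2) = 4 * Ω₀ * r₀ ^ 2 := by
  have hfrac : 0 < Φ / (4 * Ω₀ + Φ) := by positivity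
  have hr₀sq : r₀ ^ 2 = Φ / (4 * Ω₀ + Φ) := hr₀ ▸ sq_sqrt hfrac.le
  refine ⟨hr₀ ▸ sqrt_pos.mpr hfrac, ?_, ?_⟩
  · rw [hr₀sq, div_lt_one (by positivity)]; linarith
  · rw [hr₀sq]; field_simp; ring

/-- the equilibrium `(r₀, r₀, π)` with `r₀ = √(Φ/(4Ω₀+Φ))` is
Lyapunov stable: the conserved function `H` attains a strict local minimum
there. -/
theorem stationary_equilibrium_strict_local_min
    (Ω₀ Φ : ℝ) (hΩ₀ : 0 < Ω₀) (hΦ : 0 < Φ)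
    (r₀ : ℝ) (hr₀ : r₀ = Real.sqrt (Φ / (4 * Ω₀ + Φ))) :
    ∀ᶠ p in 𝓝[≠] ((r₀, r₀, Real.pi) : ℝ × ℝ × ℝ),
      HredP Ω₀ Φ (r₀, r₀, Real.pi) < HredP Ω₀ Φ p := by
  obtain ⟨hr₀pos, hr₀lt, hequil⟩ := equilibrium_radius_spec hΩ₀ hΦ hr₀
  have hnhds : Set.Ioo 0 1 ×ˢ Set.Ioo 0 1 ×ˢ Set.Ioo 0 (2 * π) ∈ 𝓝 ((r₀, r₀, π) : ℝ × ℝ × ℝ) :=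
    (isOpen_Ioo.prod (isOpen_Ioo.prod isOpen_Ioo)).mem_nhds
      ⟨⟨hr₀pos, by nlinarith⟩, ⟨hr₀pos, by nlinarith⟩, pi_pos, by linarith [pi_pos]⟩
  filter_upwards [nhdsWithin_le_nhds hnhds, self_mem_nhdsWithin]
  rintro ⟨r₁, r₂, θ⟩ ⟨⟨h₁, h₁'⟩, ⟨h₂, h₂'⟩, hθ⟩ hne
  have radial := HredP_pi_add_sq_le hΩ₀.le hr₀pos hr₀lt hequil (r₁ := r₁) (r₂ := r₂)
    (by nlinarith) (by nlinarith) (by linarith)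
  have hcoef : 0 < Ω₀ / (2 * (1 - r₀ ^ 2)) := div_pos hΩ₀ (by linarith)
  rcases eq_or_ne θ π with rfl | hθπ
  · have hr : r₁ - r₀ ≠ 0 ∨ r₂ - r₀ ≠ 0 := by
      by_contra! h
      exact hne (by rw [sub_eq_zero.mp h.1, sub_eq_zero.mp h.2]; rfl)
    have : 0 < (r₁ - r₀) ^ 2 + (r₂ - r₀) ^ 2 := by rcases hr with h | h <;> positivity
    exact (lt_add_of_pos_right _ (mul_pos hcoef this)).trans_le radial
  · calc HredP Ω₀ Φ (r₀, r₀, π) ≤ HredP Ω₀ Φ (r₁, r₂, π) :=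
          (le_add_of_nonneg_right (by positivity)).trans radial
      _ < HredP Ω₀ Φ (r₁, r₂, θ) :=
        HredP_pi_lt hΦ h₁ h₂ (neg_one_lt_cos_of_mem_Ioo hθ hθπ) (cos_lt_one_of_mem_Ioo hθ)
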